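/- Let M = (S, A, T_M, R_M) and M' = (S, A, T_{M'}, R_{M'}) be two finite MDPs on the same state set S and action set A, with rewards in [0, Rmax], such that |R_M(s,a) − R_{M'}(s,a)| ≤ η_R for all (s,a) and |T_M(s'|s,a) − T_{M'}(s'|s,a)| ≤ η_T for all (s,a,s'). Then for every policy π : S → A, every horizon n ≥ 1, and every state s ∈ S: |V^{π,n}_M(s) − V^{π,n}_{M'}(s)| ≤ n·η_R + ((n−1)·n/2)·η_T·|S|·Rmax. -/
import Mathlib


/-- Undiscounted `n`-step value of policy `π` in the MDP with transitions `T`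
and rewards `R`. -/
noncomputable def Vpol {S A : Type*} [Fintype S] (T : S → A → S → ℝ) (R : S → A → ℝ)
    (π : S → A) : ℕ → S → ℝ
  | 0, _ => 0
  | n + 1, s => R s (π s) + ∑ s' : S, T s (π s) s' * Vpol T R π n s'

lemma Vpol_bounds {S A : Type*} [Fintype S]
    (T : S → A → S → ℝ) (R : S → A → ℝ) (Rmax : ℝ)
    (hT0 : ∀ s a s', 0 ≤ T s a s') (hT1 : ∀ s a, ∑ s', T s a s' = 1)
    (hR0 : ∀ s a, 0 ≤ R s a) (hR1 : ∀ s a, R s a ≤ Rmax)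
    (π : S → A) : ∀ n s, 0 ≤ Vpol T R π n s ∧ Vpol T R π n s ≤ (n : ℝ) * Rmax := by
  intro n
  induction n with
  | zero => intro s; simp [Vpol]
  | succ m ih =>
    intro s
    constructor
    · have : 0 ≤ ∑ s' : S, T s (π s) s' * Vpol T R π m s' :=
        Finset.sum_nonneg fun s' _ => mul_nonneg (hT0 _ _ _) (ih s').1
      have := hR0 s (π s)
      simp only [Vpol]; linarith
    · have hsum : ∑ s' : S, T s (π s) s' * Vpol T R π m s'
          ≤ ∑ s' : S, T s (π s) s' * ((m : ℝ) * Rmax) :=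
        Finset.sum_le_sum fun s' _ => mul_le_mul_of_nonneg_left (ih s').2 (hT0 _ _ _)
      rw [← Finset.sum_mul, hT1, one_mul] at hsum
      have := hR1 s (π s)
      simp only [Vpol]
      push_cast
      linarith

theorem stmt8 {S A : Type*} [Fintype S] [Fintype A] [Nonempty S] [Nonempty A]
    -- two MDPs M and M' on the same state and action sets, rewards in [0, Rmax]
    (T T' : S → A → S → ℝ) (R R' : S → A → ℝ) (Rmax : ℝ) (hRmax : 0 < Rmax)
    (hT0 : ∀ s a s', 0 ≤ T s a s') (hT1 : ∀ s a, ∑ s', T s a s' = 1)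
    (hT'0 : ∀ s a s', 0 ≤ T' s a s') (hT'1 : ∀ s a, ∑ s', T' s a s' = 1)
    (hR0 : ∀ s a, 0 ≤ R s a) (hR1 : ∀ s a, R s a ≤ Rmax)
    (hR'0 : ∀ s a, 0 ≤ R' s a) (hR'1 : ∀ s a, R' s a ≤ Rmax)
    -- the two MDPs are close
    (ηR ηT : ℝ)
    (hsimR : ∀ s a, |R s a - R' s a| ≤ ηR)
    (hsimT : ∀ s a s', |T s a s' - T' s a s'| ≤ ηT)
    -- any policy, horizon n ≥ 1, and state
    (π : S → A) (n : ℕ) (hn : 1 ≤ n) (s : S) :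
    |Vpol T R π n s - Vpol T' R' π n s|
      ≤ (n : ℝ) * ηR + (((n : ℝ) - 1) * (n : ℝ) / 2) * ηT * (Fintype.card S : ℝ) * Rmax := by
  clear hn
  have hηT : 0 ≤ ηT := le_trans (abs_nonneg _)
    (hsimT (Classical.arbitrary S) (Classical.arbitrary A) (Classical.arbitrary S))
  have hVb := Vpol_bounds T R Rmax hT0 hT1 hR0 hR1 π
  induction n generalizing s with
  | zero => simp [Vpol]
  | succ m ih =>
    have key : Vpol T R π (m+1) s - Vpol T' R' π (m+1) s
        = (R s (π s) - R' s (π s))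
          + (∑ s' : S, (T s (π s) s' - T' s (π s) s') * Vpol T R π m s')
          + (∑ s' : S, T' s (π s) s' * (Vpol T R π m s' - Vpol T' R' π m s')) := by
      simp only [Vpol, sub_mul, mul_sub, Finset.sum_sub_distrib]
      ring
    rw [key]
    have h1 : |∑ s' : S, (T s (π s) s' - T' s (π s) s') * Vpol T R π m s'|
        ≤ (Fintype.card S : ℝ) * (ηT * ((m : ℝ) * Rmax)) := by
      calc |∑ s' : S, (T s (π s) s' - T' s (π s) s') * Vpol T R π m s'|
          ≤ ∑ s' : S, |(T s (π s) s' - T' s (π s) s') * Vpol T R π m s'| :=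
            Finset.abs_sum_le_sum_abs _ _
        _ ≤ ∑ _s' : S, ηT * ((m : ℝ) * Rmax) := by
            apply Finset.sum_le_sum
            intro s' _
            rw [abs_mul]
            apply mul_le_mul (hsimT _ _ _) _ (abs_nonneg _) hηT
            rw [abs_of_nonneg (hVb m s').1]; exact (hVb m s').2
        _ = (Fintype.card S : ℝ) * (ηT * ((m : ℝ) * Rmax)) := by
            rw [Finset.sum_const, Finset.card_univ, nsmul_eq_mul]
    have h2 : |∑ s' : S, T' s (π s) s' * (Vpol T R π m s' - Vpol T' R' π m s')|
        ≤ (m : ℝ) * ηR + (((m : ℝ) - 1) * (m : ℝ) / 2) * ηT * (Fintype.card S : ℝ) * Rmax := by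
      calc |∑ s' : S, T' s (π s) s' * (Vpol T R π m s' - Vpol T' R' π m s')|
          ≤ ∑ s' : S, |T' s (π s) s' * (Vpol T R π m s' - Vpol T' R' π m s')| :=
            Finset.abs_sum_le_sum_abs _ _
        _ ≤ ∑ s' : S, T' s (π s) s' *
              ((m : ℝ) * ηR + (((m : ℝ) - 1) * (m : ℝ) / 2) * ηT * (Fintype.card S : ℝ) * Rmax) := by
            apply Finset.sum_le_sum
            intro s' _
            rw [abs_mul, abs_of_nonneg (hT'0 _ _ _)]
            exact mul_le_mul_of_nonneg_left (ih s') (hT'0 _ _ _)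
        _ = (m : ℝ) * ηR + (((m : ℝ) - 1) * (m : ℝ) / 2) * ηT * (Fintype.card S : ℝ) * Rmax := by
            rw [← Finset.sum_mul, hT'1, one_mul]
    have h0 := hsimR s (π s)
    have habs := abs_add_three (R s (π s) - R' s (π s))
      (∑ s' : S, (T s (π s) s' - T' s (π s) s') * Vpol T R π m s')
      (∑ s' : S, T' s (π s) s' * (Vpol T R π m s' - Vpol T' R' π m s'))
    refine le_trans habs ?_
    push_cast
    nlinarith [mul_nonneg hηT hRmax.le, (Nat.cast_nonneg m : (0:ℝ) ≤ m),
      mul_nonneg (Nat.cast_nonneg (Fintype.card S) : (0:ℝ) ≤ Fintype.card S)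
        (mul_nonneg hηT hRmax.le)]
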